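/- arXiv:1810.01638 — 3 statements merged into one kernel-verified Lean document; each statement's English description precedes it below -/
import Mathlib

section
/- (Lemma 1) Let z : ℕ → ℝⁿ be the gradient descent sequence z_{k+1} = z_k − ∇f(z_k), and define x_k = U⁻¹ z_k for all k. Then for every k, x_{k+1} = Φ(W x_k), where Φ is applied entrywise; i.e., the recovered sequence x follows the feedforward neural network propagation with weight matrix W. -/
/-!
The gradient of `f` is `∇f(z) = z − U Φ(Uᵀ z)`, so a gradient step gives
`z_{k+1} = U Φ(Uᵀ z_k) = U Φ(U z_k)` for symmetric `U`. Applying `U⁻¹` and writing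
`U z_k = U² U⁻¹ z_k = W x_k` yields `x_{k+1} = Φ(W x_k)`.
-/

open scoped RealInnerProductSpace

noncomputable def mvE {n : ℕ} (U : Matrix (Fin n) (Fin n) ℝ)
    (v : EuclideanSpace ℝ (Fin n)) : EuclideanSpace ℝ (Fin n) :=
  WithLp.toLp 2 (U.mulVec v)

noncomputable def appE {n : ℕ} (Φ : ℝ → ℝ)
    (v : EuclideanSpace ℝ (Fin n)) : EuclideanSpace ℝ (Fin n) :=
  WithLp.toLp 2 (fun i => Φ (v i))

section Gradient

variable {F : Type*} [NormedAddCommGroup F] [InnerProductSpace ℝ F] [CompleteSpace F]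
  {f g : F → ℝ} {f' g' a : F}

theorem HasGradientAt.sub (hf : HasGradientAt f f' a) (hg : HasGradientAt g g' a) :
    HasGradientAt (fun w => f w - g w) (f' - g') a := by
  rw [hasGradientAt_iff_hasFDerivAt, map_sub]
  exact hf.hasFDerivAt.sub hg.hasFDerivAt

theorem HasGradientAt.fun_sum {ι : Type*} (s : Finset ι) {f : ι → F → ℝ} {f' : ι → F}
    (h : ∀ i ∈ s, HasGradientAt (f i) (f' i) a) :
    HasGradientAt (fun w => ∑ i ∈ s, f i w) (∑ i ∈ s, f' i) a := by
  rw [hasGradientAt_iff_hasFDerivAt, map_sum]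
  exact HasFDerivAt.fun_sum fun i hi => (h i hi).hasFDerivAt

theorem hasGradientAt_norm_sq_div_two (a : F) : HasGradientAt (fun w => ‖w‖ ^ 2 / 2) a a := by
  rw [hasGradientAt_iff_hasFDerivAt]
  simp only [div_eq_mul_inv]
  refine ((hasStrictFDerivAt_norm_sq a).hasFDerivAt.mul_const 2⁻¹).congr_fderiv ?_
  ext w
  simp

theorem HasDerivAt.hasGradientAt_comp_inner {Ψ : ℝ → ℝ} {d : ℝ} (c : F)
    (hΨ : HasDerivAt Ψ d ⟪c, a⟫) : HasGradientAt (fun w => Ψ ⟪c, w⟫) (d • c) a := by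
  rw [hasGradientAt_iff_hasFDerivAt, map_smul]
  exact hΨ.comp_hasFDerivAt a (innerSL ℝ c).hasFDerivAt

theorem hasGradientAt_half_norm_sq_sub_sum_comp_inner {ι : Type*} [Fintype ι] {Φ Ψ : ℝ → ℝ}
    (hΨ : ∀ t, HasDerivAt Ψ (Φ t) t) (c : ι → F) (a : F) :
    HasGradientAt (fun w => ‖w‖ ^ 2 / 2 - ∑ i, Ψ ⟪c i, w⟫) (a - ∑ i, Φ ⟪c i, a⟫ • c i) a :=
  (hasGradientAt_norm_sq_div_two a).sub <|
    HasGradientAt.fun_sum _ fun i _ => (hΨ _).hasGradientAt_comp_inner (c i)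

end Gradient

section Euclidean

open scoped Matrix

variable {n : ℕ}

theorem inner_toLp_transpose_apply (U : Matrix (Fin n) (Fin n) ℝ) (i : Fin n)
    (z : EuclideanSpace ℝ (Fin n)) : ⟪WithLp.toLp 2 (Uᵀ i), z⟫ = ∑ j, U j i * z j := by
  simp [PiLp.inner_apply, mul_comm]

theorem sum_smul_toLp_transpose_eq_mvE (U : Matrix (Fin n) (Fin n) ℝ)
    (v : EuclideanSpace ℝ (Fin n)) : ∑ i, v i • WithLp.toLp 2 (Uᵀ i) = mvE U v := by
  ext j
  simp [mvE, Matrix.mulVec, dotProduct, mul_comm]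

theorem mvE_mvE (A B : Matrix (Fin n) (Fin n) ℝ) (v : EuclideanSpace ℝ (Fin n)) :
    mvE A (mvE B v) = mvE (A * B) v := by
  simp [mvE, Matrix.mulVec_mulVec]

theorem gradient_half_norm_sq_sub_sum_comp_columns {Φ Ψ : ℝ → ℝ}
    (hΨ : ∀ t, HasDerivAt Ψ (Φ t) t) (U : Matrix (Fin n) (Fin n) ℝ)
    (f : EuclideanSpace ℝ (Fin n) → ℝ)
    (hf : ∀ z, f z = ‖z‖ ^ 2 / 2 - ∑ i, Ψ (∑ j, U j i * z j)) (z : EuclideanSpace ℝ (Fin n)) :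
    gradient f z = z - mvE U (appE Φ (mvE Uᵀ z)) := by
  have hcol := hasGradientAt_half_norm_sq_sub_sum_comp_inner hΨ
    (fun i => WithLp.toLp 2 (Uᵀ i)) z
  simp only [inner_toLp_transpose_apply, ← hf] at hcol
  rw [hcol.gradient, ← sum_smul_toLp_transpose_eq_mvE]
  congr! 3 with i

end Euclidean

theorem gd_sequence_is_feedforward_general (n : ℕ)
    (U : Matrix (Fin n) (Fin n) ℝ) (hU : U.IsSymm) (hUinv : IsUnit U.det)
    (W : Matrix (Fin n) (Fin n) ℝ) (hW : W = U ^ 2)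
    (Φ Ψ : ℝ → ℝ) (hΨ : ∀ x : ℝ, HasDerivAt Ψ (Φ x) x)
    (f : EuclideanSpace ℝ (Fin n) → ℝ)
    (hf : ∀ z : EuclideanSpace ℝ (Fin n),
      f z = ‖z‖ ^ 2 / 2 - ∑ i, Ψ (∑ j, U j i * z j))
    (z x : ℕ → EuclideanSpace ℝ (Fin n))
    (hz : ∀ k : ℕ, z (k + 1) = z k - gradient f (z k))
    (hx : ∀ k : ℕ, x k = mvE U⁻¹ (z k)) :
    ∀ k : ℕ, x (k + 1) = appE Φ (mvE W (x k)) := by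
  intro k
  have hWU : W * U⁻¹ = U := by
    rw [hW, sq, Matrix.mul_assoc, Matrix.mul_nonsing_inv U hUinv, Matrix.mul_one]
  rw [hx, hz, gradient_half_norm_sq_sub_sum_comp_columns hΨ U f hf, hU.eq, sub_sub_cancel, hx,
    mvE_mvE, mvE_mvE, Matrix.nonsing_inv_mul U hUinv, hWU]
  simp [mvE]

/-- Lemma 1: if `z` is the gradient descent sequence
`z_{k+1} = z_k − ∇f(z_k)` for `f(z) = ‖z‖²/2 − ∑ᵢ Ψ(Uᵢᵀ z)`, and
`x_k = U⁻¹ z_k`, then `x_{k+1} = Φ(W x_k)` with `W = U²`, i.e. the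
recovered sequence follows the feedforward network propagation. -/
theorem gd_sequence_is_feedforward (n : ℕ) (hn : 0 < n)
    (U : Matrix (Fin n) (Fin n) ℝ) (hU : U.IsSymm) (hUinv : IsUnit U.det)
    (W : Matrix (Fin n) (Fin n) ℝ) (hW : W = U ^ 2)
    (Φ Ψ : ℝ → ℝ) (hΨ : ∀ x : ℝ, HasDerivAt Ψ (Φ x) x)
    (f : EuclideanSpace ℝ (Fin n) → ℝ)
    (hf : ∀ z : EuclideanSpace ℝ (Fin n),
      f z = ‖z‖ ^ 2 / 2 - ∑ i, Ψ (∑ j, U j i * z j))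
    (z x : ℕ → EuclideanSpace ℝ (Fin n))
    (hz : ∀ k : ℕ, z (k + 1) = z k - gradient f (z k))
    (hx : ∀ k : ℕ, x k = mvE U⁻¹ (z k)) :
    ∀ k : ℕ, x (k + 1) = appE Φ (mvE W (x k)) :=
  gd_sequence_is_feedforward_general n U hU hUinv W hW Φ Ψ hΨ f hf z x hz hx
end

section
/- (Equivalence of the two forms of Nesterov's accelerated gradient iteration) Let E be a real vector space, g : ℕ → E any sequence, and β : ℕ → ℝ any sequence. Define sequences z, y : ℕ → E by y_0 = z_0, z_{k+1} = y_k − g_k, and y_{k+1} = z_{k+1} + β_{k+1}(z_{k+1} − z_k) for all k ≥ 0. Define coefficients h recursively by h_{1,0} = 1 + β_1, and for k ≥ 1: h_{k+1,j} = β_{k+1} h_{k,j} for 0 ≤ j ≤ k−2, h_{k+1,k−1} = β_{k+1}(h_{k,k−1} − 1), and h_{k+1,k} = 1 + β_{k+1}. Then for every k ≥ 0, y_{k+1} = y_k − Σ_{j=0}^{k} h_{k+1,j} g_j. -/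
/-!
Both sides satisfy the same first-order recursion. Eliminating `z` from the two-sequence form
gives `y_{k+2} - y_{k+1} = β_{k+2} (y_{k+1} - y_k + g_k) - (1 + β_{k+2}) g_{k+1}`, and the
recursion for `h` says precisely that `S_k = ∑_{j ≤ k} h_{k+1,j} g_j` obeys
`S_{k+1} = β_{k+2} (S_k - g_k) + (1 + β_{k+2}) g_{k+1}`; induction on `k` finishes.
-/

section

variable {R E : Type*} [CommRing R] [AddCommGroup E] [Module R E]

theorem nesterov_momentum_step {g z y : ℕ → E} {β : ℕ → R}
    (hz : ∀ k, z (k + 1) = y k - g k)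
    (hy : ∀ k, y (k + 1) = z (k + 1) + β (k + 1) • (z (k + 1) - z k)) (k : ℕ) :
    y (k + 2) - y (k + 1) = β (k + 2) • (y (k + 1) - y k + g k) - (1 + β (k + 2)) • g (k + 1) := by
  rw [hy (k + 1), hz (k + 1), hz k]
  module

theorem sum_range_smul_of_nesterov_row (g : ℕ → E) {a b : ℕ → R} {c : R} {n : ℕ}
    (h_low : ∀ j < n, b j = c * a j) (h_prev : b n = c * (a n - 1)) (h_last : b (n + 1) = 1 + c) :
    ∑ j ∈ Finset.range (n + 2), b j • g j =
      c • (∑ j ∈ Finset.range (n + 1), a j • g j - g n) + (1 + c) • g (n + 1) := by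
  have h_low_sum : ∑ j ∈ Finset.range n, b j • g j = c • ∑ j ∈ Finset.range n, a j • g j := by
    rw [Finset.smul_sum]
    refine Finset.sum_congr rfl fun j hj => ?_
    rw [h_low j (Finset.mem_range.mp hj), mul_smul]
  rw [Finset.sum_range_succ, Finset.sum_range_succ, Finset.sum_range_succ, h_low_sum, h_prev,
    h_last]
  module

end

/-- equivalence of the two forms of Nesterov's accelerated gradient
iteration: in a real vector space `E`, with `y_0 = z_0`, `z_{k+1} = y_k − g_k`,
`y_{k+1} = z_{k+1} + β_{k+1}(z_{k+1} − z_k)`, and coefficients `h` defined by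
`h_{1,0} = 1 + β_1`, and for `k ≥ 1`: `h_{k+1,j} = β_{k+1} h_{k,j}` for `j ≤ k−2`,
`h_{k+1,k−1} = β_{k+1}(h_{k,k−1} − 1)`, `h_{k+1,k} = 1 + β_{k+1}`, one has
`y_{k+1} = y_k − ∑_{j=0}^{k} h_{k+1,j} g_j` for every `k ≥ 0`. -/
theorem nesterov_two_forms_equiv (E : Type*) [AddCommGroup E] [Module ℝ E]
    (g : ℕ → E) (β : ℕ → ℝ) (z y : ℕ → E)
    (hy0 : y 0 = z 0)
    (hz : ∀ k : ℕ, z (k + 1) = y k - g k)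
    (hy : ∀ k : ℕ, y (k + 1) = z (k + 1) + β (k + 1) • (z (k + 1) - z k))
    (h : ℕ → ℕ → ℝ)
    (h10 : h 1 0 = 1 + β 1)
    (hrec1 : ∀ k : ℕ, 1 ≤ k → ∀ j : ℕ, j + 2 ≤ k → h (k + 1) j = β (k + 1) * h k j)
    (hrec2 : ∀ k : ℕ, 1 ≤ k → h (k + 1) (k - 1) = β (k + 1) * (h k (k - 1) - 1))
    (hrec3 : ∀ k : ℕ, 1 ≤ k → h (k + 1) k = 1 + β (k + 1)) :
    ∀ k : ℕ, y (k + 1) = y k - ∑ j ∈ Finset.range (k + 1), h (k + 1) j • g j := by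
  intro k
  induction k with
  | zero =>
    rw [Finset.sum_range_one, hy 0, hz 0, hy0, h10]
    module
  | succ k ih =>
    have h_row := sum_range_smul_of_nesterov_row g (n := k) (c := β (k + 2))
      (fun j hj => hrec1 (k + 1) k.succ_pos j (by omega))
      (by simpa using hrec2 (k + 1) k.succ_pos) (hrec3 (k + 1) k.succ_pos)
    rw [h_row]
    linear_combination (norm := module) nesterov_momentum_step hz hy k + β (k + 2) • ih
end

section
/- Let z, y, λ : ℕ → ℝⁿ satisfy λ_0 = 0, z_{k+1} = ½( (z_k − ∇f(z_k)) + y_k − λ_k ), y_{k+1} = ½( (y_k − ∇f(y_k)) + z_{k+1} + λ_k ), and λ_{k+1} = λ_k + (z_{k+1} − y_{k+1}) for all k ≥ 0. Define x'_k = U⁻¹ z_k and x_k = U⁻¹ y_k. Then for every k ≥ 0: x'_{k+1} = ½( Φ(W x'_k) + x_k − Σ_{t=1}^{k} (x'_t − x_t) ) and x_{k+1} = ½( Φ(W x_k) + x'_{k+1} + Σ_{t=1}^{k} (x'_t − x_t) ), where Φ is applied entrywise. -/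
/-!
The gradient of `f` is `∇f(z) = z - U Φ(Uᵀ z)`, so for symmetric invertible `U`,
`U⁻¹ (z - ∇f(z)) = Φ(U z) = Φ(W U⁻¹ z)`. The multiplier telescopes to
`λ_k = ∑_{t=1}^k (z_t - y_t)`, and applying the linear map `U⁻¹` to both updates gives the
recursion for `x'` and `x`.
-/

open scoped RealInnerProductSpace

theorem hasGradientAt_half_norm_sq_sub_sum {E ι : Type*} [NormedAddCommGroup E]
    [InnerProductSpace ℝ E] [CompleteSpace E] (s : Finset ι) (a : ι → E)
    {Φ Ψ : ℝ → ℝ} (hΨ : ∀ x : ℝ, HasDerivAt Ψ (Φ x) x) (v : E) :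
    HasGradientAt (fun w => ‖w‖ ^ 2 / 2 - ∑ i ∈ s, Ψ ⟪a i, w⟫)
      (v - ∑ i ∈ s, Φ ⟪a i, v⟫ • a i) v := by
  have hnorm : HasFDerivAt (fun w : E => ‖w‖ ^ 2 / 2) (innerSL ℝ v) v := by
    have h := (hasStrictFDerivAt_norm_sq v).hasFDerivAt.mul_const (2⁻¹ : ℝ)
    simp only [← div_eq_mul_inv] at h
    refine h.congr_fderiv ?_
    ext w
    simp
  have hsum : HasFDerivAt (fun w => ∑ i ∈ s, Ψ ⟪a i, w⟫)
      (∑ i ∈ s, Φ ⟪a i, v⟫ • innerSL ℝ (a i)) v :=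
    HasFDerivAt.fun_sum fun i _ => (hΨ _).comp_hasFDerivAt v (innerSL ℝ (a i)).hasFDerivAt
  rw [hasGradientAt_iff_hasFDerivAt]
  refine (hnorm.fun_sub hsum).congr_fderiv ?_
  ext w
  simp

theorem eq_sum_Icc_one_of_succ {M : Type*} [AddCommMonoid M] {a d : ℕ → M} (h₀ : a 0 = 0)
    (hsucc : ∀ k, a (k + 1) = a k + d (k + 1)) (k : ℕ) : a k = ∑ t ∈ Finset.Icc 1 k, d t := by
  induction k with
  | zero => simpa using h₀
  | succ k ih => rw [hsucc, ih, Finset.sum_Icc_succ_top (Nat.le_add_left 1 k)]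

section MatrixAction

open scoped Matrix

variable {n : ℕ}

noncomputable def colE (U : Matrix (Fin n) (Fin n) ℝ) (i : Fin n) : EuclideanSpace ℝ (Fin n) :=
  WithLp.toLp 2 (Uᵀ i)

theorem mvE_eq_toEuclideanLin (A : Matrix (Fin n) (Fin n) ℝ) :
    mvE A = Matrix.toEuclideanLin A := rfl

theorem mvE_one (v : EuclideanSpace ℝ (Fin n)) : mvE 1 v = v := by
  simp [mvE]

theorem mvE_add (A : Matrix (Fin n) (Fin n) ℝ) (u v : EuclideanSpace ℝ (Fin n)) :
    mvE A (u + v) = mvE A u + mvE A v := by simp [mvE_eq_toEuclideanLin]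

theorem mvE_sub (A : Matrix (Fin n) (Fin n) ℝ) (u v : EuclideanSpace ℝ (Fin n)) :
    mvE A (u - v) = mvE A u - mvE A v := by simp [mvE_eq_toEuclideanLin]

theorem mvE_smul (A : Matrix (Fin n) (Fin n) ℝ) (c : ℝ) (v : EuclideanSpace ℝ (Fin n)) :
    mvE A (c • v) = c • mvE A v := by simp [mvE_eq_toEuclideanLin]

theorem mvE_sum {ι : Type*} (A : Matrix (Fin n) (Fin n) ℝ) (s : Finset ι)
    (g : ι → EuclideanSpace ℝ (Fin n)) :
    mvE A (∑ t ∈ s, g t) = ∑ t ∈ s, mvE A (g t) := by simp [mvE_eq_toEuclideanLin]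

theorem inner_colE (U : Matrix (Fin n) (Fin n) ℝ) (i : Fin n) (w : EuclideanSpace ℝ (Fin n)) :
    ⟪colE U i, w⟫ = mvE Uᵀ w i := by
  simp [colE, mvE, PiLp.inner_apply, Matrix.mulVec, dotProduct, mul_comm]

theorem sum_smul_colE (U : Matrix (Fin n) (Fin n) ℝ) (c : Fin n → ℝ) :
    ∑ i, c i • colE U i = mvE U (WithLp.toLp 2 c) := by
  ext k
  simp [colE, mvE, Matrix.mulVec, dotProduct, mul_comm]

theorem gradient_half_norm_sq_sub_sum (U : Matrix (Fin n) (Fin n) ℝ) {Φ Ψ : ℝ → ℝ}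
    (hΨ : ∀ x : ℝ, HasDerivAt Ψ (Φ x) x) (v : EuclideanSpace ℝ (Fin n)) :
    gradient (fun z : EuclideanSpace ℝ (Fin n) => ‖z‖ ^ 2 / 2 - ∑ i, Ψ (∑ j, U j i * z j)) v =
      v - mvE U (appE Φ (mvE Uᵀ v)) := by
  have hfun : (fun z : EuclideanSpace ℝ (Fin n) => ‖z‖ ^ 2 / 2 - ∑ i, Ψ (∑ j, U j i * z j)) =
      fun z => ‖z‖ ^ 2 / 2 - ∑ i, Ψ ⟪colE U i, z⟫ := by
    simp [inner_colE, mvE, Matrix.mulVec, dotProduct]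
  rw [hfun, (hasGradientAt_half_norm_sq_sub_sum _ _ hΨ v).gradient, sum_smul_colE]
  simp only [inner_colE]
  rfl

end MatrixAction

theorem admm_sequence_general (n : ℕ)
    (U : Matrix (Fin n) (Fin n) ℝ) (hU : U.IsSymm) (hUinv : IsUnit U.det)
    (W : Matrix (Fin n) (Fin n) ℝ) (hW : W = U ^ 2)
    (Φ Ψ : ℝ → ℝ) (hΨ : ∀ x : ℝ, HasDerivAt Ψ (Φ x) x)
    (f : EuclideanSpace ℝ (Fin n) → ℝ)
    (hf : ∀ z : EuclideanSpace ℝ (Fin n),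
      f z = ‖z‖ ^ 2 / 2 - ∑ i, Ψ (∑ j, U j i * z j))
    (z y lam x' x : ℕ → EuclideanSpace ℝ (Fin n))
    (hlam0 : lam 0 = 0)
    (hz : ∀ k : ℕ, z (k + 1) =
      (1 / 2 : ℝ) • ((z k - gradient f (z k)) + y k - lam k))
    (hy : ∀ k : ℕ, y (k + 1) =
      (1 / 2 : ℝ) • ((y k - gradient f (y k)) + z (k + 1) + lam k))
    (hlam : ∀ k : ℕ, lam (k + 1) = lam k + (z (k + 1) - y (k + 1)))
    (hx' : ∀ k : ℕ, x' k = mvE U⁻¹ (z k))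
    (hx : ∀ k : ℕ, x k = mvE U⁻¹ (y k)) :
    ∀ k : ℕ,
      x' (k + 1) = (1 / 2 : ℝ) • (appE Φ (mvE W (x' k)) + x k
          - ∑ t ∈ Finset.Icc 1 k, (x' t - x t)) ∧
      x (k + 1) = (1 / 2 : ℝ) • (appE Φ (mvE W (x k)) + x' (k + 1)
          + ∑ t ∈ Finset.Icc 1 k, (x' t - x t)) := by
  have hUU : U * U⁻¹ = 1 := Matrix.mul_nonsing_inv U hUinv
  have hU'U : U⁻¹ * U = 1 := Matrix.nonsing_inv_mul U hUinv
  have hgrad : ∀ v, mvE U⁻¹ (v - gradient f v) = appE Φ (mvE W (mvE U⁻¹ v)) := by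
    intro v
    rw [funext hf, gradient_half_norm_sq_sub_sum U hΨ v, sub_sub_cancel, mvE_mvE, hU'U, mvE_one,
      hU.eq, mvE_mvE, hW, sq, mul_assoc, hUU, mul_one]
  have hlam_sum : ∀ k, mvE U⁻¹ (lam k) = ∑ t ∈ Finset.Icc 1 k, (mvE U⁻¹ (z t) - mvE U⁻¹ (y t)) := by
    intro k
    rw [eq_sum_Icc_one_of_succ (d := fun t => z t - y t) hlam0 hlam k, mvE_sum]
    simp only [mvE_sub]
  intro k
  simp only [hx', hx]
  constructor
  · rw [hz, mvE_smul, mvE_sub, mvE_add, hgrad, hlam_sum]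
  · rw [hy k, mvE_smul, mvE_add, mvE_add, hgrad, hlam_sum]

/-- if `z, y, λ` follow the linearized ADMM iteration (penalty 1)
`λ_0 = 0`, `z_{k+1} = ½((z_k − ∇f(z_k)) + y_k − λ_k)`,
`y_{k+1} = ½((y_k − ∇f(y_k)) + z_{k+1} + λ_k)`, `λ_{k+1} = λ_k + (z_{k+1} − y_{k+1})`,
with `f(z) = ‖z‖²/2 − ∑ᵢ Ψ(Uᵢᵀ z)`, and `x'_k = U⁻¹ z_k`, `x_k = U⁻¹ y_k`, then
for every `k`: `x'_{k+1} = ½(Φ(W x'_k) + x_k − ∑_{t=1}^k (x'_t − x_t))` and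
`x_{k+1} = ½(Φ(W x_k) + x'_{k+1} + ∑_{t=1}^k (x'_t − x_t))`, where `W = U²`. -/
theorem admm_sequence (n : ℕ) (hn : 0 < n)
    (U : Matrix (Fin n) (Fin n) ℝ) (hU : U.IsSymm) (hUinv : IsUnit U.det)
    (W : Matrix (Fin n) (Fin n) ℝ) (hW : W = U ^ 2)
    (Φ Ψ : ℝ → ℝ) (hΨ : ∀ x : ℝ, HasDerivAt Ψ (Φ x) x)
    (f : EuclideanSpace ℝ (Fin n) → ℝ)
    (hf : ∀ z : EuclideanSpace ℝ (Fin n),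
      f z = ‖z‖ ^ 2 / 2 - ∑ i, Ψ (∑ j, U j i * z j))
    (z y lam x' x : ℕ → EuclideanSpace ℝ (Fin n))
    (hlam0 : lam 0 = 0)
    (hz : ∀ k : ℕ, z (k + 1) =
      (1 / 2 : ℝ) • ((z k - gradient f (z k)) + y k - lam k))
    (hy : ∀ k : ℕ, y (k + 1) =
      (1 / 2 : ℝ) • ((y k - gradient f (y k)) + z (k + 1) + lam k))
    (hlam : ∀ k : ℕ, lam (k + 1) = lam k + (z (k + 1) - y (k + 1)))
    (hx' : ∀ k : ℕ, x' k = mvE U⁻¹ (z k))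
    (hx : ∀ k : ℕ, x k = mvE U⁻¹ (y k)) :
    ∀ k : ℕ,
      x' (k + 1) = (1 / 2 : ℝ) • (appE Φ (mvE W (x' k)) + x k
          - ∑ t ∈ Finset.Icc 1 k, (x' t - x t)) ∧
      x (k + 1) = (1 / 2 : ℝ) • (appE Φ (mvE W (x k)) + x' (k + 1)
          + ∑ t ∈ Finset.Icc 1 k, (x' t - x t)) :=
  admm_sequence_general n U hU hUinv W hW Φ Ψ hΨ f hf z y lam x' x hlam0 hz hy hlam hx' hx
end
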